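/- arXiv:2410.23416 — 3 statements merged into one kernel-verified Lean document; each statement's English description precedes it below -/
import Mathlib

section
/- There exists a temporal fair division instance with identical days in which all agents have identical valuations, such that no allocation of M is SD-EF1 up to each day. In particular, this holds for the instance with 12 agents and four identical days, where each day t ∈ [4] brings six goods g_{1,t},...,g_{6,t}, and every agent values g_{l,t} at 7−l for each l ∈ [6] and t ∈ [4]. -/
open Finset
open scoped Classical

noncomputable section

/-- `A` is an allocation of the set of goods `S` among `n` agents. -/
def IsAlloc {G : Type*} (n : ℕ) (S : Finset G) (A : Fin n → Finset G) : Prop :=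
  (∀ i j : Fin n, i ≠ j → Disjoint (A i) (A j)) ∧ Finset.univ.biUnion A = S

/-- The top-set `H_i(S,g) = {g' ∈ S : v g' ≥ v g}`. -/
def topSet {G : Type*} (v : G → ℝ) (S : Finset G) (g : G) : Finset G :=
  S.filter (fun g' => v g ≤ v g')

/-- Stochastic dominance: `X ≽^SD Y` w.r.t. valuation `v` over the set of goods `S`. -/
def SDge {G : Type*} [DecidableEq G] (v : G → ℝ) (S X Y : Finset G) : Prop :=
  ∀ g ∈ S, (Y ∩ topSet v S g).card ≤ (X ∩ topSet v S g).card

/-- The allocation `A` of goods `S` is SD-EF1. -/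
def SDEF1 {G : Type*} [DecidableEq G] (n : ℕ) (v : Fin n → G → ℝ) (S : Finset G)
    (A : Fin n → Finset G) : Prop :=
  ∀ i j : Fin n, A j ≠ ∅ → ∃ g ∈ A j, SDge (v i) S (A i) ((A j).erase g)

/-- The union of the goods of the first days, up to and including day `t`. -/
def upTo {G : Type*} [DecidableEq G] {k : ℕ} (M : Fin k → Finset G) (t : Fin k) : Finset G :=
  (Finset.Iic t).biUnion M

/-- Good `g_{l,t}` (for `l ∈ [6]`, `t ∈ [4]`) is encoded as `(l-1, t-1) : Fin 6 × Fin 4`.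
Day `t` brings the six goods `g_{1,t}, …, g_{6,t}`. -/
def M9 : Fin 4 → Finset (Fin 6 × Fin 4) := fun t => Finset.univ.filter (fun p => p.2 = t)

/-- Every agent values `g_{l,t}` at `7 − l` (with `l` 1-indexed). -/
def v9 : Fin 6 × Fin 4 → ℝ := fun p => 7 - ((p.1 : ℕ) + 1)


/-!
SD-EF1 keeps bundle sizes within one of each other, so after day 2 every agent holds exactly one
good and after day 4 exactly two: each agent gets one old good (days 1–2) and one new good
(days 3–4). After day 3, an agent whose new good comes on day 4 holds only its old good, which
must be worth at least the worse good of every pair; after day 4, the better good of every pair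
must be worth at least the worse good of every other pair. As only two old goods of each value
exist, the first condition gives all four old goods of value at most 2 to day-3 receivers, one of
whom then holds two goods of value at most 3. By the second condition, the agents receiving the
day-4 goods of values 6, 5 and 4 then hold old goods of value at most 3: that makes seven old
goods of value at most 3, but there are only six.
-/

section StochasticDominance

variable {G : Type*} [DecidableEq G] {v : G → ℝ} {S X Y : Finset G}

theorem SDge.card_le (h : SDge v S X Y) (hY : Y ⊆ S) : #Y ≤ #X := by
  obtain rfl | ⟨y, hy⟩ := Y.eq_empty_or_nonempty
  · simp
  -- The top-set of a least valuable good of `S` is all of `S`.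
  obtain ⟨g, hg, hmin⟩ := S.exists_min_image v ⟨y, hY hy⟩
  have htop : topSet v S g = S := filter_true_of_mem fun g' hg' => hmin g' hg'
  calc #Y = #(Y ∩ topSet v S g) := by rw [htop, inter_eq_left.2 hY]
    _ ≤ #(X ∩ topSet v S g) := h g hg
    _ ≤ #X := card_le_card inter_subset_left

theorem SDge.exists_le (h : SDge v S X Y) (hY : Y ⊆ S) {y : G} (hy : y ∈ Y) :
    ∃ x ∈ X, v y ≤ v x := by
  have hyS : y ∈ Y ∩ topSet v S y := mem_inter.2 ⟨hy, mem_filter.2 ⟨hY hy, le_rfl⟩⟩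
  obtain ⟨x, hx⟩ := card_pos.1 ((card_pos.2 ⟨y, hyS⟩).trans_le (h y (hY hy)))
  exact ⟨x, (mem_inter.1 hx).1, (mem_filter.1 (mem_inter.1 hx).2).2⟩

variable {n : ℕ} {w : Fin n → G → ℝ} {A : Fin n → Finset G}

theorem SDEF1.card_le_card_add_one (h : SDEF1 n w S A) (hA : ∀ k, A k ⊆ S) (i j : Fin n) :
    #(A j) ≤ #(A i) + 1 := by
  obtain hj | hj := eq_or_ne (A j) ∅
  · simp [hj]
  obtain ⟨g, hg, hsd⟩ := h i j hj
  have := hsd.card_le ((erase_subset g _).trans (hA j))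
  rw [card_erase_of_mem hg] at this
  omega

theorem SDEF1.exists_le_of_one_lt_card (h : SDEF1 n w S A) (hA : ∀ k, A k ⊆ S) {i j : Fin n}
    (hj : 1 < #(A j)) : ∃ y ∈ A j, ∃ x ∈ A i, w i y ≤ w i x := by
  obtain ⟨g, hg, hsd⟩ := h i j (card_pos.1 (by omega)).ne_empty
  obtain ⟨y, hy⟩ := (one_lt_card_iff_nontrivial.1 hj).erase_nonempty (a := g)
  exact ⟨y, mem_of_mem_erase hy, hsd.exists_le ((erase_subset g _).trans (hA j)) hy⟩

end StochasticDominance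

theorem Set.BijOn.card_filter_comp {α β : Type*} {f : α → β} {s : Finset α} {t : Finset β}
    (hf : Set.BijOn f s t) (p : β → Prop) [DecidablePred p] :
    #{a ∈ s | p (f a)} = #{b ∈ t | p b} := by
  refine card_nbij f (fun a ha => ?_) (hf.injOn.mono fun a ha => ?_) (fun b hb => ?_)
  · simp only [coe_filter] at ha ⊢
    exact ⟨hf.mapsTo ha.1, ha.2⟩
  · exact (mem_filter.1 ha).1
  · obtain ⟨hb, hpb⟩ := mem_filter.1 hb
    obtain ⟨a, ha, rfl⟩ := hf.surjOn hb
    exact ⟨a, mem_filter.2 ⟨ha, hpb⟩, rfl⟩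

theorem eq_of_le_add_one_of_sum_eq {ι : Type*} [Fintype ι] {c : ι → ℕ} {q : ℕ}
    (hc : ∀ i j, c j ≤ c i + 1) (hsum : ∑ i, c i = Fintype.card ι * q) (i : ι) : c i = q := by
  have hconst : ∑ _j : ι, q = Fintype.card ι * q := by simp
  by_contra hne
  obtain hlt | hgt := lt_or_gt_of_ne hne
  · have := sum_lt_sum (fun j _ => (hc i j).trans hlt) ⟨i, mem_univ i, hlt⟩
    omega
  · have := sum_lt_sum (s := univ) (fun j _ => (show q ≤ c j by have := hc j i; omega))
      ⟨i, mem_univ i, hgt⟩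
    omega

section Allocation

variable {G : Type*} {n : ℕ} {S : Finset G} {A : Fin n → Finset G}

theorem IsAlloc.exists_mem (hA : IsAlloc n S A) {g : G} (hg : g ∈ S) : ∃ i, g ∈ A i := by
  rw [← hA.2] at hg
  simpa using hg

theorem IsAlloc.eq_of_mem (hA : IsAlloc n S A) {g : G} {i j : Fin n} (hi : g ∈ A i)
    (hj : g ∈ A j) : i = j := by
  by_contra hij
  exact disjoint_left.1 (hA.1 i j hij) hi hj

theorem IsAlloc.sum_card_inter [DecidableEq G] (hA : IsAlloc n S A) {T : Finset G} (hT : T ⊆ S) :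
    ∑ i, #(A i ∩ T) = #T := by
  rw [← card_biUnion fun i _ j _ hij => (hA.1 i j hij).mono inter_subset_left inter_subset_left,
    ← biUnion_inter, show univ.biUnion A = S by convert hA.2, inter_eq_right.2 hT]

theorem IsAlloc.card_inter_eq_of_sdef1 [DecidableEq G] {v : Fin n → G → ℝ} (hA : IsAlloc n S A)
    {T : Finset G} (hT : T ⊆ S) (hSD : SDEF1 n v T (fun i => A i ∩ T)) {q : ℕ}
    (hq : #T = n * q) (i : Fin n) : #(A i ∩ T) = q :=
  eq_of_le_add_one_of_sum_eq (hSD.card_le_card_add_one fun _ => inter_subset_right)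
    (by rw [hA.sum_card_inter hT, hq, Fintype.card_fin]) i

end Allocation

theorem v9_le_v9 {p q : Fin 6 × Fin 4} : v9 p ≤ v9 q ↔ (q.1 : ℕ) ≤ p.1 := by
  simp only [v9, sub_le_sub_iff_left, add_le_add_iff_right, Nat.cast_le]

theorem mem_upTo_M9 {g : Fin 6 × Fin 4} {t : Fin 4} : g ∈ upTo M9 t ↔ g.2 ≤ t := by
  simp [upTo, M9]

theorem upTo_M9_three : upTo M9 3 = univ := by decide

theorem M9_identicalDays (t t' : Fin 4) : ∃ f : Fin 6 × Fin 4 → Fin 6 × Fin 4,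
    Set.BijOn f ↑(M9 t) ↑(M9 t') ∧ ∀ g ∈ M9 t, v9 g = v9 (f g) := by
  have maps (s s' : Fin 4) : Set.MapsTo (fun p : Fin 6 × Fin 4 => (p.1, s')) ↑(M9 s) ↑(M9 s') :=
    fun p _ => by simp [M9]
  have invOn :
      Set.InvOn (fun p : Fin 6 × Fin 4 => (p.1, t)) (fun p => (p.1, t')) ↑(M9 t) ↑(M9 t') :=
    ⟨fun p hp => Prod.ext rfl (mem_filter.1 hp).2.symm,
      fun p hp => Prod.ext rfl (mem_filter.1 hp).2.symm⟩
  exact ⟨_, invOn.bijOn (maps t t') (maps t' t), fun _ _ => rfl⟩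

/- Below, `ψ g` stands for the good of days 1–2 held by the agent who receives `g` on days 3–4,
and `hday3`, `hday4` are what SD-EF1 after days 3 and 4 says about the levels `g.1` of these
goods. -/
theorem old_level_le_three {ψ : Fin 6 × Fin 4 → Fin 6 × Fin 4}
    (hψ : Set.BijOn ψ ↑((upTo M9 1)ᶜ) ↑(upTo M9 1))
    (hday3 : ∀ l l' : Fin 6, ((ψ (l', 3)).1 : ℕ) ≤ max ((ψ (l, 2)).1 : ℕ) l) (l' : Fin 6) :
    ((ψ (l', 3)).1 : ℕ) ≤ 3 := by
  by_contra! h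
  have hsub : insert (l', 3) ({g | (g.1 : ℕ) < 4 ∧ g.2 = 2} : Finset (Fin 6 × Fin 4)) ⊆
      {g ∈ (upTo M9 1)ᶜ | 4 ≤ ((ψ g).1 : ℕ)} := by
    rintro ⟨k, d⟩ hg
    simp only [mem_insert, Prod.mk.injEq, mem_filter, mem_univ, true_and] at hg
    simp only [mem_filter, mem_compl, mem_upTo_M9, not_le]
    rcases hg with ⟨rfl, rfl⟩ | ⟨hk, rfl⟩
    · exact ⟨by simp, h⟩
    · have := hday3 k l'
      exact ⟨by simp, by omega⟩
  have := (card_le_card hsub).trans_eq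
    ((hψ.card_filter_comp (4 ≤ ·.1.val)).trans (by decide : #{g ∈ upTo M9 1 | 4 ≤ g.1.val} = 4))
  rw [card_insert_of_notMem (by simp), show #{g : Fin 6 × Fin 4 | (g.1 : ℕ) < 4 ∧ g.2 = 2} = 4
    by decide] at this
  omega

theorem not_bijOn_of_level_bounds (ψ : Fin 6 × Fin 4 → Fin 6 × Fin 4)
    (hψ : Set.BijOn ψ ↑((upTo M9 1)ᶜ) ↑(upTo M9 1))
    (hday3 : ∀ l l' : Fin 6, ((ψ (l', 3)).1 : ℕ) ≤ max ((ψ (l, 2)).1 : ℕ) l)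
    (hday4 : ∀ l l' : Fin 6, min ((ψ (l, 2)).1 : ℕ) l ≤ max ((ψ (l', 3)).1 : ℕ) l') : False := by
  set F : ℕ → Finset (Fin 6 × Fin 4) := fun t => {g ∈ (upTo M9 1)ᶜ | t ≤ ((ψ g).1 : ℕ)}
  have mem_F {t : ℕ} {g : Fin 6 × Fin 4} : g ∈ F t ↔ 1 < g.2 ∧ t ≤ ((ψ g).1 : ℕ) := by
    simp [F, mem_upTo_M9]
  -- Only two goods of each level are handed out in the first two days.
  have card_F3 : #(F 3) = 6 := (hψ.card_filter_comp (3 ≤ ·.1.val)).trans (by decide)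
  have card_F4 : #(F 4) = 4 := (hψ.card_filter_comp (4 ≤ ·.1.val)).trans (by decide)
  have day_of_mem_F4 : ∀ g ∈ F 4, g.2 = 2 := by
    rintro ⟨k, d⟩ hg
    obtain ⟨hd, hψk⟩ : 1 < d ∧ 4 ≤ ((ψ (k, d)).1 : ℕ) := mem_F.1 hg
    have := old_level_le_three hψ hday3 k
    show d = 2
    by_contra hd2
    obtain rfl : d = 3 := by omega
    omega
  -- Of the four day-3 receivers of old goods of level at least 4, one gets a day-3 good of level
  -- at least 3.
  obtain ⟨⟨l, d⟩, hF4, hl⟩ := exists_mem_notMem_of_card_lt_card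
    (t := F 4) (s := {g : Fin 6 × Fin 4 | (g.1 : ℕ) < 3 ∧ g.2 = 2}) (by rw [card_F4]; decide)
  obtain rfl : d = 2 := day_of_mem_F4 _ hF4
  have hψl : 4 ≤ ((ψ (l, 2)).1 : ℕ) := (mem_F.1 hF4).2
  have hl3 : 3 ≤ (l : ℕ) := by simpa using hl
  have hsub : ({g | (g.1 : ℕ) < 3 ∧ g.2 = 3} : Finset (Fin 6 × Fin 4)) ∪ F 4 ⊆ F 3 := by
    rintro ⟨k, d⟩ hg
    simp only [mem_union, mem_filter, mem_univ, true_and] at hg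
    rcases hg with ⟨hk, rfl⟩ | hg
    · have := hday4 l k
      exact mem_F.2 ⟨by simp, by omega⟩
    · exact mem_F.2 ⟨(mem_F.1 hg).1, by have := (mem_F.1 hg).2; omega⟩
  have hdisj : Disjoint ({g | (g.1 : ℕ) < 3 ∧ g.2 = 3} : Finset (Fin 6 × Fin 4)) (F 4) :=
    disjoint_left.2 fun g hg hg4 => by simp_all [day_of_mem_F4 g hg4]
  have := card_le_card hsub
  rw [card_union_of_disjoint hdisj, card_F3, card_F4,
    show #{g : Fin 6 × Fin 4 | (g.1 : ℕ) < 3 ∧ g.2 = 3} = 3 by decide] at this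
  omega

def SDEF1UpToEachDay {G : Type*} [DecidableEq G] {k : ℕ} (n : ℕ) (v : Fin n → G → ℝ)
    (M : Fin k → Finset G) (A : Fin n → Finset G) : Prop :=
  ∀ t, SDEF1 n v (upTo M t) (fun i => A i ∩ upTo M t)

section Allocation9

variable {A : Fin 12 → Finset (Fin 6 × Fin 4)}

theorem card_inter_upTo_M9 (hA : IsAlloc 12 (univ.biUnion M9) A)
    (hSD : SDEF1UpToEachDay 12 (fun _ => v9) M9 A) {t : Fin 4} {q : ℕ}
    (hq : #(upTo M9 t) = 12 * q) (i : Fin 12) : #(A i ∩ upTo M9 t) = q :=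
  hA.card_inter_eq_of_sdef1 (biUnion_subset_biUnion_of_subset_left M9 (subset_univ _)) (hSD t) hq i

theorem eq_pair_of_mem (hA : IsAlloc 12 (univ.biUnion M9) A)
    (hSD : SDEF1UpToEachDay 12 (fun _ => v9) M9 A) {i : Fin 12} {a g : Fin 6 × Fin 4}
    (ha : A i ∩ upTo M9 1 = {a}) (hg : g ∈ A i) (hg1 : 1 < g.2) : A i = {a, g} := by
  have hcard : #(A i) = 2 := by
    simpa [upTo_M9_three] using card_inter_upTo_M9 hA hSD (t := 3) (q := 2) (by decide) i
  obtain ⟨haA, ha1⟩ := mem_inter.1 (ha ▸ mem_singleton_self a)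
  have hag : a ≠ g := by
    rintro rfl
    exact absurd (mem_upTo_M9.1 ha1) (not_le.2 hg1)
  refine (eq_of_subset_of_card_le ?_ ?_).symm
  · exact insert_subset haA (singleton_subset_iff.2 hg)
  · rw [hcard, card_pair hag]

theorem exists_level_le (hSD : SDEF1UpToEachDay 12 (fun _ => v9) M9 A) {t : Fin 4}
    {i j : Fin 12} (hj : 1 < #(A j ∩ upTo M9 t)) :
    ∃ y ∈ A j ∩ upTo M9 t, ∃ x ∈ A i ∩ upTo M9 t, (x.1 : ℕ) ≤ y.1 := by
  simpa only [v9_le_v9] using (hSD t).exists_le_of_one_lt_card (fun _ => inter_subset_right) hj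

variable {old : Fin 12 → Fin 6 × Fin 4}

theorem old_level_le_of_day_three (hA : IsAlloc 12 (univ.biUnion M9) A)
    (hSD : SDEF1UpToEachDay 12 (fun _ => v9) M9 A) (hold : ∀ k, A k ∩ upTo M9 1 = {old k})
    {i j : Fin 12} {l l' : Fin 6} (hi : (l', 3) ∈ A i) (hj : (l, 2) ∈ A j) :
    ((old i).1 : ℕ) ≤ max ((old j).1 : ℕ) l := by
  have hold1 (k : Fin 12) : (old k).2 ≤ 1 :=
    mem_upTo_M9.1 (mem_inter.1 (hold k ▸ mem_singleton_self _)).2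
  have hAi := eq_pair_of_mem hA hSD (hold i) hi (by simp)
  have hAj := eq_pair_of_mem hA hSD (hold j) hj (by simp)
  have hj2 : A j ∩ upTo M9 2 = A j := by
    refine inter_eq_left.2 fun g hg => mem_upTo_M9.2 ?_
    rw [hAj, mem_insert, mem_singleton] at hg
    rcases hg with rfl | rfl
    · exact (hold1 j).trans (by decide)
    · exact le_rfl
  have hcard : #(A j) = 2 := by
    simpa [upTo_M9_three] using card_inter_upTo_M9 hA hSD (t := 3) (q := 2) (by decide) j
  obtain ⟨y, hy, x, hx, hxy⟩ :=
    exists_level_le hSD (i := i) (j := j) (t := 2) (by rw [hj2, hcard]; norm_num)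
  rw [hAi] at hx
  rw [hj2, hAj] at hy
  simp only [mem_inter, mem_insert, mem_singleton, mem_upTo_M9] at hx hy
  obtain ⟨rfl | rfl, hx2⟩ := hx
  · rcases hy with rfl | rfl
    · exact hxy.trans (le_max_left _ _)
    · exact hxy.trans (le_max_right _ _)
  · exact absurd hx2 (by simp)

theorem min_level_le_of_day_four (hA : IsAlloc 12 (univ.biUnion M9) A)
    (hSD : SDEF1UpToEachDay 12 (fun _ => v9) M9 A) (hold : ∀ k, A k ∩ upTo M9 1 = {old k})
    {i j : Fin 12} {l l' : Fin 6} (hi : (l, 2) ∈ A i) (hj : (l', 3) ∈ A j) :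
    min ((old i).1 : ℕ) l ≤ max ((old j).1 : ℕ) l' := by
  have hcard : #(A j ∩ upTo M9 3) = 2 :=
    card_inter_upTo_M9 hA hSD (t := 3) (q := 2) (by decide) j
  obtain ⟨y, hy, x, hx, hxy⟩ := exists_level_le hSD (i := i) (j := j) (t := 3) (by omega)
  rw [upTo_M9_three, inter_univ, eq_pair_of_mem hA hSD (hold i) hi (by simp), mem_insert,
    mem_singleton] at hx
  rw [upTo_M9_three, inter_univ, eq_pair_of_mem hA hSD (hold j) hj (by simp), mem_insert,
    mem_singleton] at hy
  calc min ((old i).1 : ℕ) l ≤ x.1 := by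
        rcases hx with rfl | rfl
        exacts [min_le_left _ _, min_le_right _ _]
    _ ≤ y.1 := hxy
    _ ≤ max ((old j).1 : ℕ) l' := by
        rcases hy with rfl | rfl
        exacts [le_max_left _ _, le_max_right _ _]

theorem bijOn_old_owner (hA : IsAlloc 12 (univ.biUnion M9) A)
    (hSD : SDEF1UpToEachDay 12 (fun _ => v9) M9 A) (hold : ∀ k, A k ∩ upTo M9 1 = {old k})
    {owner : Fin 6 × Fin 4 → Fin 12} (howner : ∀ g, g ∈ A (owner g)) :
    Set.BijOn (fun g => old (owner g)) ↑((upTo M9 1)ᶜ) ↑(upTo M9 1) := by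
  have hold' (k : Fin 12) : old k ∈ A k ∧ old k ∈ upTo M9 1 :=
    mem_inter.1 (hold k ▸ mem_singleton_self _)
  have maps : Set.MapsTo (fun g => old (owner g)) ↑((upTo M9 1)ᶜ) ↑(upTo M9 1) :=
    fun g _ => (hold' _).2
  have inj : Set.InjOn (fun g => old (owner g)) ↑((upTo M9 1)ᶜ) := by
    intro g hg g' hg' h
    have hown : owner g' = owner g :=
      hA.eq_of_mem (hold' _).1 ((show old (owner g) = old (owner g') from h) ▸ (hold' _).1)
    have hg'A : g' ∈ A (owner g) := hown ▸ howner g'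
    rw [eq_pair_of_mem hA hSD (hold _) (howner g) (by simpa [mem_upTo_M9] using hg), mem_insert,
      mem_singleton] at hg'A
    rcases hg'A with rfl | rfl
    · exact absurd (hold' _).2 (by simpa using hg')
    · rfl
  exact ⟨maps, inj, surjOn_of_injOn_of_card_le _ maps inj (by decide)⟩

end Allocation9

/-- The instance with 12 agents, four identical days `M9`, and identical
valuations `v9` has identical days, and no allocation of its goods is SD-EF1 up to each
day. -/
theorem identical_days_identical_vals_no_sdef1_upToEachDay :
    (∀ t t' : Fin 4, ∃ f : Fin 6 × Fin 4 → Fin 6 × Fin 4,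
      Set.BijOn f ↑(M9 t) ↑(M9 t') ∧ ∀ g ∈ M9 t, v9 g = v9 (f g)) ∧
    ∀ A : Fin 12 → Finset (Fin 6 × Fin 4),
      IsAlloc 12 (Finset.univ.biUnion M9) A →
      ¬ (∀ t : Fin 4, SDEF1 12 (fun _ => v9) (upTo M9 t) (fun i => A i ∩ upTo M9 t)) := by
  refine ⟨M9_identicalDays, fun A hA hSD => ?_⟩
  choose old hold using fun i =>
    card_eq_one.1 (card_inter_upTo_M9 hA hSD (t := 1) (q := 1) (by decide) i)
  choose owner howner using fun g => hA.exists_mem (g := g) (by simp [M9])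
  exact not_bijOn_of_level_bounds (fun g => old (owner g)) (bijOn_old_owner hA hSD hold howner)
    (fun _ _ => old_level_le_of_day_three hA hSD hold (howner _) (howner _))
    (fun _ _ => min_level_le_of_day_four hA hSD hold (howner _) (howner _))
end
end

section
/- For every temporal fair division instance with identical days, there exists an allocation A of M that is SD-EF1 per day and SD-PROP1 overall. -/
open Finset
open scoped Classical

noncomputable section

/-- The allocation `A` of goods `S` is SD-PROP1: every agent `i` with `A i ≠ S` has a good
`g ∈ S \ A i` such that `|(A i ∪ {g}) ∩ H_i(S,g')| ≥ ⌈|H_i(S,g')| / n⌉` for all `g' ∈ S`. -/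
def SDPROP1 {G : Type*} [DecidableEq G] (n : ℕ) (v : Fin n → G → ℝ) (S : Finset G)
    (A : Fin n → Finset G) : Prop :=
  ∀ i : Fin n, A i ≠ S → ∃ g ∈ S \ A i, ∀ g' ∈ S,
    Nat.ceil (((topSet (v i) S g').card : ℚ) / n) ≤ ((insert g (A i)) ∩ topSet (v i) S g').card


/-!
Allocate every day by round robin, which is SD-EF1 on that day. Among the `x` goods of a day
that agent `i` values at least as much as a given good, round robin gives `i` at least as many
as `i` has turns among the first `x` picks. Day `t` starts with agent `⌊t n / k⌋`, which spreads
the starting agents evenly over the `k` identical days; by Hermite's identity agent `i` then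
gets at least `k x / n - 1` of those `k x` goods overall, and adding `i`'s favorite good outside
its bundle gives SD-PROP1.
-/

lemma Fin.val_sub_add_one {n : ℕ} [NeZero n] (x c : Fin n) :
    (x - (c + 1)).val = if x = c then n - 1 else (x - c).val - 1 := by
  obtain ⟨m, rfl⟩ := Nat.exists_eq_succ_of_ne_zero (NeZero.ne n)
  rw [← sub_sub, Fin.coe_sub_one]
  simp only [sub_eq_zero, Nat.succ_sub_one]

lemma Nat.mod_eq_iff_dvd_add_sub {m n i : ℕ} (hi : i < n) : m % n = i ↔ n ∣ m + (n - i) := by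
  have hn : i + (n - i) = n := by omega
  have hn0 : n ≡ 0 [MOD n] := Nat.modEq_zero_iff_dvd.2 dvd_rfl
  have hmod : m % n = i ↔ m ≡ i [MOD n] := by rw [Nat.ModEq, Nat.mod_eq_of_lt hi]
  rw [hmod, ← Nat.modEq_zero_iff_dvd]
  constructor
  · intro h
    have := h.add_right (n - i)
    rw [hn] at this
    exact this.trans hn0
  · intro h
    exact Nat.ModEq.add_right_cancel' (n - i) (by rw [hn]; exact h.trans hn0.symm)

/-- Hermite's identity. -/
theorem Nat.sum_range_add_div (b : ℕ) {k : ℕ} (hk : 0 < k) : ∑ t ∈ range k, (b + t) / k = b := by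
  induction b with
  | zero => exact sum_eq_zero fun t ht => by rw [zero_add, Nat.div_eq_of_lt (mem_range.1 ht)]
  | succ b ih =>
    obtain ⟨m, rfl⟩ := Nat.exists_eq_add_one_of_ne_zero hk.ne'
    have h := (sum_range_succ' (fun t => (b + t) / (m + 1)) (m + 1)).symm.trans
      (sum_range_succ (fun t => (b + t) / (m + 1)) (m + 1))
    rw [ih, add_zero, Nat.add_div_right b hk] at h
    simp only [← add_assoc] at h
    simp only [Nat.add_right_comm b 1]
    omega

theorem Nat.sum_range_mul_div_add_div (n k a : ℕ) (hn : 0 < n) :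
    ∑ t ∈ range k, (t * n / k + a) / n = a * k / n := by
  rcases k.eq_zero_or_pos with rfl | hk
  · simp
  calc ∑ t ∈ range k, (t * n / k + a) / n = ∑ t ∈ range k, (a * k / n + t) / k := by
        refine sum_congr rfl fun t _ => ?_
        rw [← Nat.add_mul_div_right _ _ hk, Nat.div_div_eq_div_mul, mul_comm k,
          ← Nat.div_div_eq_div_mul, add_comm, Nat.add_mul_div_right _ _ hn]
    _ = a * k / n := Nat.sum_range_add_div _ hk

section TopSets

variable {G : Type*}

def favorite (u : G → ℝ) (S : Finset G) (hS : S.Nonempty) : G :=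
  (S.exists_max_image u hS).choose

lemma favorite_mem (u : G → ℝ) {S : Finset G} (hS : S.Nonempty) : favorite u S hS ∈ S :=
  (S.exists_max_image u hS).choose_spec.1

lemma le_favorite (u : G → ℝ) {S : Finset G} (hS : S.Nonempty) {x : G} (hx : x ∈ S) :
    u x ≤ u (favorite u S hS) :=
  (S.exists_max_image u hS).choose_spec.2 x hx

lemma topSet_eq_empty_of_lt {u : G → ℝ} {X : Finset G} {g g₀ : G}
    (hX : ∀ x ∈ X, u x ≤ u g) (h : u g < u g₀) : topSet u X g₀ = ∅ :=
  filter_eq_empty_iff.2 fun x hx hle => (hle.trans (hX x hx)).not_gt h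

lemma card_topSet_eq_of_bijOn {u : G → ℝ} {S S' : Finset G} {f : G → G}
    (hf : Set.BijOn f S S') (hu : ∀ g ∈ S, u g = u (f g)) (g₀ : G) :
    #(topSet u S g₀) = #(topSet u S' g₀) := by
  refine card_nbij f (fun a ha => ?_) (hf.injOn.mono (coe_subset.2 (filter_subset _ _)))
    (fun b hb => ?_)
  · have ha := mem_filter.1 ha
    exact mem_filter.2 ⟨hf.mapsTo ha.1, hu a ha.1 ▸ ha.2⟩
  · have hb := mem_filter.1 hb
    obtain ⟨a, ha, rfl⟩ := hf.surjOn hb.1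
    exact ⟨a, mem_filter.2 ⟨ha, (hu a ha).symm ▸ hb.2⟩, rfl⟩

lemma exists_forall_card_topSet_eq {ι : Type*} {u : G → ℝ} {M : ι → Finset G}
    (hid : ∀ t t', ∃ f : G → G, Set.BijOn f (M t) (M t') ∧ ∀ g ∈ M t, u g = u (f g)) (g₀ : G) :
    ∃ x, ∀ t, #(topSet u (M t) g₀) = x := by
  rcases isEmpty_or_nonempty ι with hι | ⟨⟨t₀⟩⟩
  · exact ⟨0, hι.elim⟩
  · refine ⟨#(topSet u (M t₀) g₀), fun t => ?_⟩
    obtain ⟨f, hf, hu⟩ := hid t t₀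
    exact card_topSet_eq_of_bijOn hf hu g₀

/-- Stochastic dominance of `X` over `Y` for `u`, at thresholds ranging over all goods. -/
def SDDom (u : G → ℝ) (X Y : Finset G) : Prop :=
  ∀ g₀, #(topSet u Y g₀) ≤ #(topSet u X g₀)

lemma SDDom.refl (u : G → ℝ) (X : Finset G) : SDDom u X X := fun _ => le_rfl

variable [DecidableEq G]

lemma inter_topSet_of_subset (u : G → ℝ) {X S : Finset G} (h : X ⊆ S) (g : G) :
    X ∩ topSet u S g = topSet u X g := by
  rw [topSet, inter_filter, inter_eq_left.2 h, topSet]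

lemma topSet_erase (u : G → ℝ) (S : Finset G) (g g₀ : G) :
    topSet u (S.erase g) g₀ = (topSet u S g₀).erase g :=
  filter_erase _ _ _

lemma card_topSet_insert (u : G → ℝ) {X : Finset G} {g : G} (hg : g ∉ X) {g₀ : G}
    (h : u g₀ ≤ u g) : #(topSet u (insert g X) g₀) = #(topSet u X g₀) + 1 := by
  rw [topSet, filter_insert, if_pos h, card_insert_of_notMem (fun h' => hg (mem_filter.1 h').1)]
  rfl

lemma card_topSet_le_card_topSet_erase_add_one (u : G → ℝ) (X : Finset G) (g g₀ : G) :
    #(topSet u X g₀) ≤ #(topSet u (X.erase g) g₀) + 1 := by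
  rw [topSet_erase]
  exact Nat.le_add_of_sub_le pred_card_le_card_erase

lemma card_topSet_biUnion {ι : Type*} [Fintype ι] {M : ι → Finset G}
    (hM : ∀ t t', t ≠ t' → Disjoint (M t) (M t')) (u : G → ℝ) (g₀ : G) :
    #(topSet u (univ.biUnion M) g₀) = ∑ t, #(topSet u (M t) g₀) := by
  rw [topSet, filter_biUnion, card_biUnion fun t _ t' _ h => disjoint_filter_filter (hM t t' h)]
  rfl

variable {u : G → ℝ} {X Y : Finset G}

lemma SDDom.erase_right (h : SDDom u X Y) (g : G) : SDDom u X (Y.erase g) :=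
  fun g₀ => (card_le_card (filter_subset_filter _ (erase_subset g Y))).trans (h g₀)

lemma SDDom.sdge {S : Finset G} (h : SDDom u X Y) (hX : X ⊆ S) (hY : Y ⊆ S) : SDge u S X Y :=
  fun g₀ _ => by rw [inter_topSet_of_subset u hX, inter_topSet_of_subset u hY]; exact h g₀

lemma SDDom.insert_of_erase {g g₁ : G} (h : SDDom u X (Y.erase g₁)) (hgX : g ∉ X)
    (hY : ∀ y ∈ Y, u y ≤ u g) : SDDom u (insert g X) Y := fun g₀ => by
  by_cases hle : u g₀ ≤ u g
  · rw [card_topSet_insert u hgX hle]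
    exact (card_topSet_le_card_topSet_erase_add_one u Y g₁ g₀).trans
      (Nat.add_le_add_right (h g₀) 1)
  · rw [topSet_eq_empty_of_lt hY (not_le.1 hle), card_empty]
    exact Nat.zero_le _

end TopSets

section Allocations

variable {G : Type*} {n : ℕ} {S : Finset G} {A : Fin n → Finset G}

lemma isAlloc_iff : IsAlloc n S A ↔
    (∀ i j, i ≠ j → Disjoint (A i) (A j)) ∧ ∀ x, (∃ i, x ∈ A i) ↔ x ∈ S := by
  simp only [IsAlloc, Finset.ext_iff, mem_biUnion, mem_univ, true_and]

lemma IsAlloc.subset (h : IsAlloc n S A) (i : Fin n) : A i ⊆ S :=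
  fun x hx => (isAlloc_iff.1 h).2 x |>.1 ⟨i, hx⟩

variable [DecidableEq G]

lemma IsAlloc.update_insert (h : IsAlloc n S A) {g : G} (hg : g ∉ S) (c : Fin n) :
    IsAlloc n (insert g S) (Function.update A c (insert g (A c))) := by
  have hgA : ∀ j, g ∉ A j := fun j hj => hg (h.subset j hj)
  refine isAlloc_iff.2 ⟨fun i j hij => ?_, fun x => ?_⟩
  · rcases eq_or_ne i c with rfl | hi
    · rw [Function.update_self, Function.update_of_ne hij.symm, disjoint_insert_left]
      exact ⟨hgA j, h.1 i j hij⟩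
    rcases eq_or_ne j c with rfl | hj
    · rw [Function.update_self, Function.update_of_ne hij, disjoint_insert_right]
      exact ⟨hgA i, h.1 i j hij⟩
    · rw [Function.update_of_ne hi, Function.update_of_ne hj]
      exact h.1 i j hij
  · rw [mem_insert, ← (isAlloc_iff.1 h).2 x]
    constructor
    · rintro ⟨i, hi⟩
      rcases eq_or_ne i c with rfl | hic
      · rw [Function.update_self, mem_insert] at hi
        exact hi.imp_right fun hi => ⟨i, hi⟩
      · exact Or.inr ⟨i, by rwa [Function.update_of_ne hic] at hi⟩
    · rintro (rfl | ⟨i, hi⟩)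
      · exact ⟨c, by simp⟩
      · rcases eq_or_ne i c with rfl | hic
        · exact ⟨i, by simp [hi]⟩
        · exact ⟨i, by rwa [Function.update_of_ne hic]⟩

variable {ι : Type*} [Fintype ι] {M : ι → Finset G}

lemma biUnion_inter_of_subset (hM : ∀ t t', t ≠ t' → Disjoint (M t) (M t')) {B : ι → Finset G}
    (hB : ∀ t, B t ⊆ M t) (t : ι) : univ.biUnion B ∩ M t = B t := by
  ext x
  simp only [mem_inter, mem_biUnion, mem_univ, true_and]
  constructor
  · rintro ⟨⟨t', hx⟩, hxt⟩
    rcases eq_or_ne t' t with rfl | h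
    · exact hx
    · exact absurd hxt (disjoint_left.1 (hM t' t h) (hB t' hx))
  · exact fun hx => ⟨⟨t, hx⟩, hB t hx⟩

lemma isAlloc_biUnion (hM : ∀ t t', t ≠ t' → Disjoint (M t) (M t'))
    {B : ι → Fin n → Finset G} (hB : ∀ t, IsAlloc n (M t) (B t)) :
    IsAlloc n (univ.biUnion M) fun i => univ.biUnion fun t => B t i := by
  refine isAlloc_iff.2 ⟨fun i j hij => ?_, fun x => ?_⟩
  · refine (disjoint_biUnion_left _ _ _).2 fun t _ =>
      (disjoint_biUnion_right _ _ _).2 fun t' _ => ?_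
    rcases eq_or_ne t t' with rfl | htt'
    · exact (hB t).1 i j hij
    · exact (hM t t' htt').mono ((hB t).subset i) ((hB t').subset j)
  · simp only [mem_biUnion, mem_univ, true_and]
    rw [exists_comm]
    exact exists_congr fun t => (isAlloc_iff.1 (hB t)).2 x

lemma sdprop1_of_card_topSet_le (v : Fin n → G → ℝ) (hA : ∀ i, A i ⊆ S)
    (h : ∀ i, ∀ g' ∈ S, #(topSet (v i) S g') ≤ n * (#(topSet (v i) (A i) g') + 1)) :
    SDPROP1 n v S A := by
  intro i hi
  have hne : (S \ A i).Nonempty := sdiff_nonempty.2 fun hsub => hi (Subset.antisymm (hA i) hsub)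
  set g := favorite (v i) (S \ A i) hne
  have hg := mem_sdiff.1 (favorite_mem (v i) hne)
  have hn : (1 : ℚ) ≤ n := by exact_mod_cast i.pos
  refine ⟨g, favorite_mem _ hne, fun g' hg' => ?_⟩
  rw [inter_topSet_of_subset _ (insert_subset hg.1 (hA i)), Nat.ceil_le,
    div_le_iff₀ (by positivity)]
  by_cases hle : v i g' ≤ v i g
  · rw [card_topSet_insert _ hg.2 hle]
    exact_mod_cast (h i g' hg').trans_eq (mul_comm _ _)
  · have hsub : topSet (v i) S g' ⊆ topSet (v i) (insert g (A i)) g' := fun y hy => by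
      obtain ⟨hyS, hy⟩ := mem_filter.1 hy
      refine mem_filter.2 ⟨mem_insert_of_mem ?_, hy⟩
      by_contra hyA
      exact hle (hy.trans (le_favorite _ hne (mem_sdiff.2 ⟨hyS, hyA⟩)))
    calc (#(topSet (v i) S g') : ℚ) ≤ #(topSet (v i) (insert g (A i)) g') := by
          exact_mod_cast card_le_card hsub
      _ ≤ #(topSet (v i) (insert g (A i)) g') * n := le_mul_of_one_le_right (by positivity) hn

end Allocations

section Turns

variable {n : ℕ}

/-- The number of turns of agent `i` among the first `x` picks of round robin starting with
agent `s % n`. -/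
def turns (s x : ℕ) (i : Fin n) : ℕ := #{p ∈ range x | (s + p) % n = i}

lemma turns_zero (s : ℕ) (i : Fin n) : turns s 0 i = 0 := rfl

lemma turns_succ (s x : ℕ) (i : Fin n) :
    turns s (x + 1) i = (if s % n = i then 1 else 0) + turns (s + 1) x i := by
  rw [turns, turns, card_filter, card_filter, sum_range_succ', add_comm]
  simp only [← add_assoc, Nat.add_right_comm s _ 1, add_zero]

lemma turns_add_one (s x : ℕ) (i : Fin n) :
    turns s (x + 1) i = turns s x i + if (s + x) % n = i then 1 else 0 := by
  rw [turns, turns, card_filter, card_filter, sum_range_succ]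

lemma turns_mono (s : ℕ) (i : Fin n) : Monotone (turns s · i) :=
  fun _ _ h => card_le_card (filter_subset_filter _ (range_subset_range.2 h))

lemma turns_congr {s s' : ℕ} (h : s % n = s' % n) (x : ℕ) (i : Fin n) :
    turns s x i = turns s' x i := by
  simp only [turns, Nat.add_mod s, Nat.add_mod s', h]

lemma turns_add_div (s x : ℕ) (i : Fin n) :
    turns s x i + (s + (n - 1 - i)) / n = (s + x + (n - 1 - i)) / n := by
  induction x with
  | zero => rw [turns_zero, zero_add, add_zero]
  | succ x ih =>
    have hdvd : (s + x) % n = i ↔ n ∣ s + x + (n - 1 - i) + 1 := by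
      rw [add_assoc _ (n - 1 - i), show n - 1 - i.val + 1 = n - i by omega]
      exact Nat.mod_eq_iff_dvd_add_sub i.isLt
    rw [turns_add_one, Nat.add_right_comm, ih, ← add_assoc s x 1, Nat.add_right_comm _ 1,
      Nat.succ_div]
    simp only [hdvd]

variable [NeZero n]

lemma turns_val_add_one (c : Fin n) (x : ℕ) (i : Fin n) :
    turns (c + 1 : Fin n) x i = turns (c + 1) x i :=
  turns_congr (by rw [Fin.val_add, Fin.val_one', Nat.mod_mod, Nat.add_mod_mod]) x i

theorem le_sum_turns (k x : ℕ) (i : Fin n) :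
    k * x ≤ n * (∑ t ∈ range k, turns (t * n / k) x i + 1) := by
  have hn : 0 < n := Nat.pos_of_neZero n
  set d := n - 1 - i.val
  have hsum : ∑ t ∈ range k, turns (t * n / k) x i + d * k / n = (x + d) * k / n := by
    rw [← Nat.sum_range_mul_div_add_div n k d hn, ← sum_add_distrib,
      ← Nat.sum_range_mul_div_add_div n k (x + d) hn]
    exact sum_congr rfl fun t _ => by rw [turns_add_div, add_assoc]
  have h₁ := Nat.lt_div_mul_add (a := (x + d) * k) hn
  have h₂ := Nat.div_mul_le_self (d * k) n
  generalize ∑ t ∈ range k, turns (t * n / k) x i = T at hsum ⊢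
  generalize (x + d) * k / n = q₁ at hsum h₁
  generalize d * k / n = q₂ at hsum h₂
  subst hsum
  nlinarith

end Turns

section RoundRobin

variable {G : Type*} [DecidableEq G] {n : ℕ} [NeZero n]

def roundRobin (v : Fin n → G → ℝ) (c : Fin n) (S : Finset G) : Fin n → Finset G :=
  if hS : S.Nonempty then
    let R := roundRobin v (c + 1) (S.erase (favorite (v c) S hS))
    Function.update R c (insert (favorite (v c) S hS) (R c))
  else fun _ => ∅
termination_by #S
decreasing_by exact card_erase_lt_of_mem (favorite_mem _ hS)

variable (v : Fin n → G → ℝ) (c : Fin n)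

lemma roundRobin_empty (i : Fin n) : roundRobin v c ∅ i = ∅ := by
  rw [roundRobin, dif_neg Finset.not_nonempty_empty]

lemma roundRobin_of_nonempty {S : Finset G} (hS : S.Nonempty) :
    roundRobin v c S =
      let R := roundRobin v (c + 1) (S.erase (favorite (v c) S hS))
      Function.update R c (insert (favorite (v c) S hS) (R c)) := by
  rw [roundRobin, dif_pos hS]

lemma roundRobin_self {S : Finset G} (hS : S.Nonempty) :
    roundRobin v c S c = insert (favorite (v c) S hS)
      (roundRobin v (c + 1) (S.erase (favorite (v c) S hS)) c) := by
  rw [roundRobin_of_nonempty v c hS]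
  exact Function.update_self _ _ _

lemma roundRobin_of_ne {S : Finset G} (hS : S.Nonempty) {i : Fin n} (hi : i ≠ c) :
    roundRobin v c S i = roundRobin v (c + 1) (S.erase (favorite (v c) S hS)) i := by
  rw [roundRobin_of_nonempty v c hS]
  exact Function.update_of_ne hi _ _

theorem roundRobin_isAlloc (S : Finset G) : IsAlloc n S (roundRobin v c S) := by
  induction S using Finset.strongInduction generalizing c with
  | H S ih =>
    rcases S.eq_empty_or_nonempty with rfl | hS
    · exact isAlloc_iff.2 ⟨fun i j _ => by simp [roundRobin_empty],
        fun x => by simp [roundRobin_empty]⟩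
    · have hg := favorite_mem (v c) hS
      have h := (ih _ (erase_ssubset hg) (c + 1)).update_insert (notMem_erase _ S) c
      rwa [insert_erase hg, ← roundRobin_of_nonempty] at h

lemma favorite_notMem_roundRobin {S : Finset G} (hS : S.Nonempty) (i : Fin n) :
    favorite (v c) S hS ∉ roundRobin v (c + 1) (S.erase (favorite (v c) S hS)) i :=
  fun h => notMem_erase _ S ((roundRobin_isAlloc v _ _).subset i h)

theorem turns_le_card_topSet_roundRobin (i : Fin n) (S : Finset G) (g₀ : G) :
    turns c #(topSet (v i) S g₀) i ≤ #(topSet (v i) (roundRobin v c S i) g₀) := by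
  induction S using Finset.strongInduction generalizing c with
  | H S ih =>
    rcases S.eq_empty_or_nonempty with rfl | hS
    · simp [topSet, turns_zero]
    set g := favorite (v c) S hS
    have hg : g ∈ S := favorite_mem _ hS
    have ih' := ih _ (erase_ssubset hg) (c + 1)
    rw [topSet_erase, turns_val_add_one] at ih'
    by_cases hic : i = c
    · subst hic
      rw [roundRobin_self v i hS]
      by_cases hle : v i g₀ ≤ v i g
      · rw [card_topSet_insert _ (favorite_notMem_roundRobin v i hS i) hle,
          ← card_erase_add_one (show g ∈ topSet (v i) S g₀ from mem_filter.2 ⟨hg, hle⟩), turns_succ,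
          if_pos (Nat.mod_eq_of_lt i.isLt), add_comm]
        exact Nat.add_le_add_right ih' 1
      · rw [topSet_eq_empty_of_lt (fun x hx => le_favorite _ hS hx) (not_le.1 hle)]
        simp [turns_zero]
    · rw [roundRobin_of_ne v c hS hic]
      calc turns c #(topSet (v i) S g₀) i
          ≤ turns c (#((topSet (v i) S g₀).erase g) + 1) i :=
            turns_mono _ _ (Nat.le_add_of_sub_le pred_card_le_card_erase)
        _ = turns (c + 1) #((topSet (v i) S g₀).erase g) i := by
            rw [turns_succ, Nat.mod_eq_of_lt c.isLt, if_neg (Fin.val_ne_of_ne (Ne.symm hic)),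
              zero_add]
        _ ≤ _ := ih'

/-- The two cases are proved together because a pick by `a` or by `b` swaps them. -/
theorem roundRobin_sdDom {a b : Fin n} (S : Finset G) :
    ((a - c).val < (b - c).val → SDDom (v a) (roundRobin v c S a) (roundRobin v c S b)) ∧
    ((b - c).val < (a - c).val → roundRobin v c S b ≠ ∅ →
      ∃ g ∈ roundRobin v c S b,
        SDDom (v a) (roundRobin v c S a) ((roundRobin v c S b).erase g)) := by
  induction S using Finset.strongInduction generalizing c with
  | H S ih =>
    rcases S.eq_empty_or_nonempty with rfl | hS
    · simp only [roundRobin_empty]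
      exact ⟨fun _ => SDDom.refl _ _, fun _ h => absurd rfl h⟩
    obtain ⟨ih₁, ih₂⟩ := ih _ (erase_ssubset (favorite_mem (v c) hS)) (c + 1)
    rw [Fin.val_sub_add_one, Fin.val_sub_add_one] at ih₁ ih₂
    have hpos : ∀ x, x ≠ c → 0 < (x - c).val := fun x hx =>
      Nat.pos_of_ne_zero (by rwa [Ne, Fin.val_eq_zero_iff, sub_eq_zero])
    have := (a - c).isLt
    have := (b - c).isLt
    constructor
    · intro hlt
      have hbc : b ≠ c := by rintro rfl; simp at hlt
      rw [roundRobin_of_ne v c hS hbc]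
      by_cases hac : a = c
      · subst hac
        rw [if_pos rfl, if_neg hbc] at ih₂
        rw [roundRobin_self v a hS]
        rcases eq_or_ne (roundRobin v (a + 1) (S.erase (favorite (v a) S hS)) b) ∅ with hb | hb
        · exact fun g₀ => by simp [hb, topSet]
        obtain ⟨g₁, -, hdom⟩ := ih₂ (by omega) hb
        exact hdom.insert_of_erase (favorite_notMem_roundRobin v a hS a) fun y hy =>
          le_favorite _ hS (mem_of_mem_erase ((roundRobin_isAlloc v _ _).subset b hy))
      · rw [if_neg hac, if_neg hbc] at ih₁
        rw [roundRobin_of_ne v c hS hac]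
        exact ih₁ (by have := hpos a hac; omega)
    · intro hlt hne
      have hac : a ≠ c := by rintro rfl; simp at hlt
      rw [roundRobin_of_ne v c hS hac]
      by_cases hbc : b = c
      · subst hbc
        rw [if_pos rfl, if_neg hac] at ih₁
        rw [roundRobin_self v b hS]
        refine ⟨_, mem_insert_self _ _, ?_⟩
        rw [erase_insert (favorite_notMem_roundRobin v b hS b)]
        exact ih₁ (by omega)
      · rw [if_neg hac, if_neg hbc] at ih₂
        rw [roundRobin_of_ne v c hS hbc] at hne ⊢
        exact ih₂ (by have := hpos b hbc; omega) hne

theorem roundRobin_sdef1 (S : Finset G) : SDEF1 n v S (roundRobin v c S) := by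
  intro i j hj
  have hsub := (roundRobin_isAlloc v c S).subset
  suffices ∃ g ∈ roundRobin v c S j,
      SDDom (v i) (roundRobin v c S i) ((roundRobin v c S j).erase g) by
    obtain ⟨g, hg, h⟩ := this
    exact ⟨g, hg, h.sdge (hsub i) ((erase_subset g _).trans (hsub j))⟩
  obtain ⟨g, hg⟩ := nonempty_iff_ne_empty.2 hj
  rcases eq_or_ne i j with rfl | hij
  · exact ⟨g, hg, (SDDom.refl _ _).erase_right g⟩
  have hne : (i - c).val ≠ (j - c).val := fun h => hij (sub_left_inj.1 (Fin.ext h))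
  rcases lt_or_gt_of_ne hne with hlt | hlt
  · exact ⟨g, hg, ((roundRobin_sdDom v c S).1 hlt).erase_right g⟩
  · exact (roundRobin_sdDom v c S).2 hlt hj

end RoundRobin

section Days

def dayStart (n k t : ℕ) [NeZero n] : Fin n := Fin.ofNat n (t * n / k)

variable {G : Type*} [DecidableEq G] {n : ℕ} [NeZero n]

theorem card_topSet_le_roundRobin_dayStart (v : Fin n → G → ℝ) {k : ℕ} {M : Fin k → Finset G}
    (hM : ∀ t t', t ≠ t' → Disjoint (M t) (M t')) (i : Fin n) (g' : G) {x : ℕ}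
    (hx : ∀ t, #(topSet (v i) (M t) g') = x) :
    #(topSet (v i) (univ.biUnion M) g') ≤
      n * (#(topSet (v i) (univ.biUnion fun t : Fin k =>
        roundRobin v (dayStart n k t) (M t) i) g') + 1) := by
  have hR := fun t : Fin k => (roundRobin_isAlloc v (dayStart n k t) (M t)).subset i
  rw [card_topSet_biUnion hM,
    card_topSet_biUnion fun t t' h => (hM t t' h).mono (hR t) (hR t')]
  simp only [hx, sum_const, card_univ, Fintype.card_fin, smul_eq_mul]
  calc k * x ≤ n * (∑ t ∈ range k, turns (t * n / k) x i + 1) := le_sum_turns k x i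
    _ = n * (∑ t : Fin k, turns (dayStart n k t : Fin n) x i + 1) := by
        rw [← Fin.sum_univ_eq_sum_range (fun t => turns (t * n / k) x i)]
        congr 2
        exact sum_congr rfl fun t _ => turns_congr (Nat.mod_mod _ _).symm x i
    _ ≤ n * (∑ t : Fin k, #(topSet (v i) (roundRobin v (dayStart n k t) (M t) i) g') + 1) := by
        gcongr with t
        rw [← hx t]
        exact turns_le_card_topSet_roundRobin v _ i (M t) g'

end Days

theorem identical_days_sdef1_perDay_sdprop1_overall_general
    {G : Type*} [DecidableEq G] (n k : ℕ) (hn : 0 < n)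
    (M : Fin k → Finset G)
    (hdisj : ∀ t t' : Fin k, t ≠ t' → Disjoint (M t) (M t'))
    (v : Fin n → G → ℝ)
    (hid : ∀ t t' : Fin k, ∃ f : G → G,
      Set.BijOn f ↑(M t) ↑(M t') ∧ ∀ i : Fin n, ∀ g ∈ M t, v i g = v i (f g)) :
    ∃ A : Fin n → Finset G,
      IsAlloc n (Finset.univ.biUnion M) A ∧
      (∀ t : Fin k, SDEF1 n v (M t) (fun i => A i ∩ M t)) ∧
      SDPROP1 n v (Finset.univ.biUnion M) A := by
  have : NeZero n := ⟨hn.ne'⟩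
  set B := fun t : Fin k => roundRobin v (dayStart n k t) (M t)
  have hB : ∀ t, IsAlloc n (M t) (B t) := fun t => roundRobin_isAlloc v _ _
  have hA := isAlloc_biUnion hdisj hB
  refine ⟨_, hA, fun t => ?_, sdprop1_of_card_topSet_le v hA.subset fun i g' _ => ?_⟩
  · have hday : (fun i => (univ.biUnion fun t' => B t' i) ∩ M t) = B t :=
      funext fun i => biUnion_inter_of_subset hdisj (fun t' => (hB t').subset i) t
    rw [hday]
    exact roundRobin_sdef1 v _ _
  · obtain ⟨x, hx⟩ := exists_forall_card_topSet_eq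
      (fun t t' => (hid t t').imp fun _ hf => ⟨hf.1, hf.2 i⟩) g'
    exact card_topSet_le_roundRobin_dayStart v hdisj i g' hx

/-- For every temporal fair division instance with identical days,
there is an allocation that is SD-EF1 per day and SD-PROP1 overall. -/
theorem identical_days_sdef1_perDay_sdprop1_overall
    {G : Type*} [DecidableEq G] (n k : ℕ) (hn : 0 < n)
    (M : Fin k → Finset G)
    (hdisj : ∀ t t' : Fin k, t ≠ t' → Disjoint (M t) (M t'))
    (v : Fin n → G → ℝ)
    (hv : ∀ i : Fin n, ∀ g ∈ Finset.univ.biUnion M, 0 ≤ v i g)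
    (hid : ∀ t t' : Fin k, ∃ f : G → G,
      Set.BijOn f ↑(M t) ↑(M t') ∧ ∀ i : Fin n, ∀ g ∈ M t, v i g = v i (f g)) :
    ∃ A : Fin n → Finset G,
      IsAlloc n (Finset.univ.biUnion M) A ∧
      (∀ t : Fin k, SDEF1 n v (M t) (fun i => A i ∩ M t)) ∧
      SDPROP1 n v (Finset.univ.biUnion M) A :=
  identical_days_sdef1_perDay_sdprop1_overall_general n k hn M hdisj v hid
end
end

section
/- (Sufficiency for SD-EF1) Let A be an allocation of a finite set of goods S among n agents with additive nonnegative valuations. If |A_i ∩ T_i(S,r)| ≥ |A_j ∩ T_i(S,r)| − 1 for all agents i,j and all r ∈ [|S|], then A is SD-EF1. -/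
open Finset
open scoped Classical

noncomputable section

/-- The strict preference `g ≻̂ g'` obtained from the valuation `v`, breaking ties by the
fixed (global) linear order on the goods. -/
def strictPref {G : Type*} [LinearOrder G] (v : G → ℝ) (g g' : G) : Prop :=
  v g' < v g ∨ (v g = v g' ∧ g' < g)

/-- `T` is a top-set prefix of `S` under `≻̂`: `T ⊆ S` and every good of `T` is strictly
preferred (ties broken by the global order) to every good of `S \ T`.  The set
`T_i(S, r)` is the unique such `T` of cardinality `r`. -/
def IsTopPrefix {G : Type*} [LinearOrder G] (v : G → ℝ) (S T : Finset G) : Prop :=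
  T ⊆ S ∧ ∀ g ∈ T, ∀ g' ∈ S \ T, strictPref v g g'

/-!
Every top-set `H_i(S,g')` is itself a prefix `T_i(S,r)` for the order `≻̂_i`, with `r ≥ 1`.
Let agent `i` remove from `A_j` a good `g` that `i` values most. If `g ∈ H_i(S,g')`, removing it
lowers `|A_j ∩ H_i(S,g')|` by one, which the hypothesis compensates; otherwise `A_j` misses
`H_i(S,g')` altogether.
-/

theorem IsAlloc.subset_s11 {G : Type*} {n : ℕ} {S : Finset G} {A : Fin n → Finset G}
    (hA : IsAlloc n S A) (j : Fin n) : A j ⊆ S :=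
  hA.2 ▸ subset_biUnion_of_mem A (mem_univ j)

theorem self_mem_topSet {G : Type*} {v : G → ℝ} {S : Finset G} {g : G} (hg : g ∈ S) :
    g ∈ topSet v S g :=
  mem_filter.2 ⟨hg, le_rfl⟩

theorem isTopPrefix_topSet {G : Type*} [LinearOrder G] (v : G → ℝ) (S : Finset G) (g : G) :
    IsTopPrefix v S (topSet v S g) := by
  refine ⟨filter_subset _ _, fun a ha b hb => Or.inl ?_⟩
  obtain ⟨hbS, hbT⟩ := mem_sdiff.1 hb
  have hb' : v b < v g := not_le.1 fun hgb => hbT (mem_filter.2 ⟨hbS, hgb⟩)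
  exact hb'.trans_le (mem_filter.1 ha).2

theorem inter_topSet_eq_empty_of_isMax {G : Type*} [DecidableEq G] {v : G → ℝ}
    {S Y : Finset G} {g g' : G} (hY : Y ⊆ S) (hg : g ∈ Y) (hmax : ∀ y ∈ Y, v y ≤ v g)
    (hgT : g ∉ topSet v S g') : Y ∩ topSet v S g' = ∅ := by
  refine eq_empty_of_forall_notMem fun y hy => hgT ?_
  obtain ⟨hyY, hyT⟩ := mem_inter.1 hy
  exact mem_filter.2 ⟨hY hg, (mem_filter.1 hyT).2.trans (hmax y hyY)⟩

theorem sdge_erase_of_card_inter_topSet_le {G : Type*} [DecidableEq G] {v : G → ℝ}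
    {S X Y : Finset G} {g : G} (hY : Y ⊆ S) (hg : g ∈ Y) (hmax : ∀ y ∈ Y, v y ≤ v g)
    (hcard : ∀ g' ∈ S, (Y ∩ topSet v S g').card ≤ (X ∩ topSet v S g').card + 1) :
    SDge v S X (Y.erase g) := by
  intro g' hg'
  by_cases hgT : g ∈ topSet v S g'
  · rw [erase_inter, card_erase_of_mem (mem_inter.2 ⟨hg, hgT⟩)]
    have := hcard g' hg'
    omega
  · calc ((Y.erase g) ∩ topSet v S g').card
        ≤ (Y ∩ topSet v S g').card := card_le_card (inter_subset_inter_right (erase_subset _ _))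
      _ = 0 := by rw [inter_topSet_eq_empty_of_isMax hY hg hmax hgT, card_empty]
      _ ≤ _ := Nat.zero_le _

theorem sdef1_of_topPrefix_condition_general
    {G : Type*} [LinearOrder G] (n : ℕ)
    (S : Finset G) (v : Fin n → G → ℝ)
    (A : Fin n → Finset G) (hA : IsAlloc n S A)
    (h : ∀ i j : Fin n, ∀ r ∈ Finset.Icc 1 S.card, ∀ T : Finset G,
      IsTopPrefix (v i) S T → T.card = r → (A j ∩ T).card ≤ (A i ∩ T).card + 1) :
    SDEF1 n v S A := by
  intro i j hj
  obtain ⟨g, hg, hmax⟩ := exists_max_image (A j) (v i) (nonempty_of_ne_empty hj)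
  refine ⟨g, hg, sdge_erase_of_card_inter_topSet_le (hA.subset_s11 j) hg hmax fun g' hg' => ?_⟩
  have hr : (topSet (v i) S g').card ∈ Icc 1 S.card :=
    mem_Icc.2 ⟨card_pos.2 ⟨g', self_mem_topSet hg'⟩, card_le_card (filter_subset _ _)⟩
  exact h i j _ hr _ (isTopPrefix_topSet _ _ _) rfl

/-- **Sufficiency for SD-EF1.** If `|A i ∩ T_i(S,r)| ≥ |A j ∩ T_i(S,r)| − 1`
for all agents `i, j` and all `r ∈ [|S|]`, then the allocation `A` is SD-EF1. -/
theorem sdef1_of_topPrefix_condition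
    {G : Type*} [LinearOrder G] (n : ℕ) (hn : 0 < n)
    (S : Finset G) (v : Fin n → G → ℝ)
    (hv : ∀ i : Fin n, ∀ g ∈ S, 0 ≤ v i g)
    (A : Fin n → Finset G) (hA : IsAlloc n S A)
    (h : ∀ i j : Fin n, ∀ r ∈ Finset.Icc 1 S.card, ∀ T : Finset G,
      IsTopPrefix (v i) S T → T.card = r → (A j ∩ T).card ≤ (A i ∩ T).card + 1) :
    SDEF1 n v S A :=
  sdef1_of_topPrefix_condition_general n S v A hA h
end
end
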